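/- Under the rank condition, the traces (equivalently, since these matrices are symmetric idempotent, the ranks) of the scaled weighting matrices are: trace(T·Ψ₀) = G, trace(T·Λ₁) = k₂ − G, trace(T·Λ₂) = T − k₁ − 2G, trace(T·Λ₄) = T − k₁ − G, trace(T·Ψ_R) = k₂, and trace(T·Λ_R) = T − k₁ − k₂ − G. -/

import Mathlib

open Matrix

variable {T G k₁ k₂ : ℕ}

/-- Orthogonal projection `P̄[A] = A(AᵀA)⁻¹Aᵀ` onto the column space of `A`. -/
noncomputable def projM {n : Type*} [Fintype n] [DecidableEq n]
    (A : Matrix (Fin T) n ℝ) : Matrix (Fin T) (Fin T) ℝ :=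
  A * (Aᵀ * A)⁻¹ * Aᵀ

/-- The annihilator `M̄[A] = I - P̄[A]`. -/
noncomputable def annM {n : Type*} [Fintype n] [DecidableEq n]
    (A : Matrix (Fin T) n ℝ) : Matrix (Fin T) (Fin T) ℝ :=
  1 - projM A

noncomputable def M1 (X₁ : Matrix (Fin T) (Fin k₁) ℝ) : Matrix (Fin T) (Fin T) ℝ :=
  annM X₁

noncomputable def Pm (X₁ : Matrix (Fin T) (Fin k₁) ℝ) (X₂ : Matrix (Fin T) (Fin k₂) ℝ) :
    Matrix (Fin T) (Fin T) ℝ :=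
  projM (fromCols X₁ X₂)

noncomputable def Mm (X₁ : Matrix (Fin T) (Fin k₁) ℝ) (X₂ : Matrix (Fin T) (Fin k₂) ℝ) :
    Matrix (Fin T) (Fin T) ℝ :=
  annM (fromCols X₁ X₂)

noncomputable def N1 (X₁ : Matrix (Fin T) (Fin k₁) ℝ) (X₂ : Matrix (Fin T) (Fin k₂) ℝ) :
    Matrix (Fin T) (Fin T) ℝ :=
  M1 X₁ * Pm X₁ X₂

noncomputable def B1 (Y : Matrix (Fin T) (Fin G) ℝ) (X₁ : Matrix (Fin T) (Fin k₁) ℝ) :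
    Matrix (Fin G) (Fin T) ℝ :=
  (Yᵀ * M1 X₁ * Y)⁻¹ * (Yᵀ * M1 X₁)

noncomputable def B2 (Y : Matrix (Fin T) (Fin G) ℝ) (X₁ : Matrix (Fin T) (Fin k₁) ℝ)
    (X₂ : Matrix (Fin T) (Fin k₂) ℝ) : Matrix (Fin G) (Fin T) ℝ :=
  (Yᵀ * N1 X₁ X₂ * Y)⁻¹ * (Yᵀ * N1 X₁ X₂)

noncomputable def C1 (Y : Matrix (Fin T) (Fin G) ℝ) (X₁ : Matrix (Fin T) (Fin k₁) ℝ)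
    (X₂ : Matrix (Fin T) (Fin k₂) ℝ) : Matrix (Fin G) (Fin T) ℝ :=
  B2 Y X₁ X₂ - B1 Y X₁

/-- OLS estimator `β̂`. -/
noncomputable def betaOLS (y : Fin T → ℝ) (Y : Matrix (Fin T) (Fin G) ℝ)
    (X₁ : Matrix (Fin T) (Fin k₁) ℝ) : Fin G → ℝ :=
  B1 Y X₁ *ᵥ y

/-- 2SLS estimator `β̃`. -/
noncomputable def beta2S (y : Fin T → ℝ) (Y : Matrix (Fin T) (Fin G) ℝ)
    (X₁ : Matrix (Fin T) (Fin k₁) ℝ) (X₂ : Matrix (Fin T) (Fin k₂) ℝ) : Fin G → ℝ :=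
  B2 Y X₁ X₂ *ᵥ y

noncomputable def OmIV (Y : Matrix (Fin T) (Fin G) ℝ) (X₁ : Matrix (Fin T) (Fin k₁) ℝ)
    (X₂ : Matrix (Fin T) (Fin k₂) ℝ) : Matrix (Fin G) (Fin G) ℝ :=
  (T : ℝ)⁻¹ • (Yᵀ * N1 X₁ X₂ * Y)

noncomputable def OmLS (Y : Matrix (Fin T) (Fin G) ℝ) (X₁ : Matrix (Fin T) (Fin k₁) ℝ) :
    Matrix (Fin G) (Fin G) ℝ :=
  (T : ℝ)⁻¹ • (Yᵀ * M1 X₁ * Y)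

noncomputable def SigV (Y : Matrix (Fin T) (Fin G) ℝ) (X₁ : Matrix (Fin T) (Fin k₁) ℝ)
    (X₂ : Matrix (Fin T) (Fin k₂) ℝ) : Matrix (Fin G) (Fin G) ℝ :=
  (T : ℝ)⁻¹ • (Yᵀ * Mm X₁ X₂ * Y)

noncomputable def Dhat (Y : Matrix (Fin T) (Fin G) ℝ) (X₁ : Matrix (Fin T) (Fin k₁) ℝ)
    (X₂ : Matrix (Fin T) (Fin k₂) ℝ) : Matrix (Fin G) (Fin G) ℝ :=
  (OmIV Y X₁ X₂)⁻¹ - (OmLS Y X₁)⁻¹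

noncomputable def Psi0 (Y : Matrix (Fin T) (Fin G) ℝ) (X₁ : Matrix (Fin T) (Fin k₁) ℝ)
    (X₂ : Matrix (Fin T) (Fin k₂) ℝ) : Matrix (Fin T) (Fin T) ℝ :=
  (C1 Y X₁ X₂)ᵀ * (Dhat Y X₁ X₂)⁻¹ * C1 Y X₁ X₂

noncomputable def N2 (Y : Matrix (Fin T) (Fin G) ℝ) (X₁ : Matrix (Fin T) (Fin k₁) ℝ)
    (X₂ : Matrix (Fin T) (Fin k₂) ℝ) : Matrix (Fin T) (Fin T) ℝ :=
  1 - M1 X₁ * Y * B2 Y X₁ X₂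

noncomputable def Lam1 (Y : Matrix (Fin T) (Fin G) ℝ) (X₁ : Matrix (Fin T) (Fin k₁) ℝ)
    (X₂ : Matrix (Fin T) (Fin k₂) ℝ) : Matrix (Fin T) (Fin T) ℝ :=
  (T : ℝ)⁻¹ • (N1 X₁ X₂ * annM (N1 X₁ X₂ * Y) * N1 X₁ X₂)

noncomputable def Lam2 (Y : Matrix (Fin T) (Fin G) ℝ) (X₁ : Matrix (Fin T) (Fin k₁) ℝ)
    (X₂ : Matrix (Fin T) (Fin k₂) ℝ) : Matrix (Fin T) (Fin T) ℝ :=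
  M1 X₁ * ((T : ℝ)⁻¹ • annM (M1 X₁ * Y) - Psi0 Y X₁ X₂) * M1 X₁

noncomputable def Lam3 (Y : Matrix (Fin T) (Fin G) ℝ) (X₁ : Matrix (Fin T) (Fin k₁) ℝ)
    (X₂ : Matrix (Fin T) (Fin k₂) ℝ) : Matrix (Fin T) (Fin T) ℝ :=
  (T : ℝ)⁻¹ • (M1 X₁ * (N2 Y X₁ X₂)ᵀ * N2 Y X₁ X₂ * M1 X₁)

noncomputable def Lam4 (Y : Matrix (Fin T) (Fin G) ℝ) (X₁ : Matrix (Fin T) (Fin k₁) ℝ) :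
    Matrix (Fin T) (Fin T) ℝ :=
  (T : ℝ)⁻¹ • (M1 X₁ * annM (M1 X₁ * Y) * M1 X₁)

def Ybar (Y : Matrix (Fin T) (Fin G) ℝ) (X₁ : Matrix (Fin T) (Fin k₁) ℝ) :
    Matrix (Fin T) (Fin G ⊕ Fin k₁) ℝ :=
  fromCols Y X₁

def Zfull (Y : Matrix (Fin T) (Fin G) ℝ) (X₁ : Matrix (Fin T) (Fin k₁) ℝ)
    (X₂ : Matrix (Fin T) (Fin k₂) ℝ) : Matrix (Fin T) (Fin G ⊕ (Fin k₁ ⊕ Fin k₂)) ℝ :=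
  fromCols Y (fromCols X₁ X₂)

noncomputable def PsiR (Y : Matrix (Fin T) (Fin G) ℝ) (X₁ : Matrix (Fin T) (Fin k₁) ℝ)
    (X₂ : Matrix (Fin T) (Fin k₂) ℝ) : Matrix (Fin T) (Fin T) ℝ :=
  (T : ℝ)⁻¹ • (annM (Ybar Y X₁) - annM (Zfull Y X₁ X₂))

noncomputable def LamR (Y : Matrix (Fin T) (Fin G) ℝ) (X₁ : Matrix (Fin T) (Fin k₁) ℝ)
    (X₂ : Matrix (Fin T) (Fin k₂) ℝ) : Matrix (Fin T) (Fin T) ℝ :=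
  (T : ℝ)⁻¹ • annM (Zfull Y X₁ X₂)

/-- `σ̂² = (1/T)(y−Yβ̂)ᵀM₁(y−Yβ̂)`. -/
noncomputable def sigHat2 (y : Fin T → ℝ) (Y : Matrix (Fin T) (Fin G) ℝ)
    (X₁ : Matrix (Fin T) (Fin k₁) ℝ) : ℝ :=
  (T : ℝ)⁻¹ * ((y - Y *ᵥ betaOLS y Y X₁) ⬝ᵥ (M1 X₁ *ᵥ (y - Y *ᵥ betaOLS y Y X₁)))

/-- `σ̃² = (1/T)(y−Yβ̃)ᵀM₁(y−Yβ̃)`. -/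
noncomputable def sigTil2 (y : Fin T → ℝ) (Y : Matrix (Fin T) (Fin G) ℝ)
    (X₁ : Matrix (Fin T) (Fin k₁) ℝ) (X₂ : Matrix (Fin T) (Fin k₂) ℝ) : ℝ :=
  (T : ℝ)⁻¹ * ((y - Y *ᵥ beta2S y Y X₁ X₂) ⬝ᵥ (M1 X₁ *ᵥ (y - Y *ᵥ beta2S y Y X₁ X₂)))

/-- `σ̃₁² = (1/T)(y−Yβ̃)ᵀN₁(y−Yβ̃)`. -/
noncomputable def sigTil1sq (y : Fin T → ℝ) (Y : Matrix (Fin T) (Fin G) ℝ)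
    (X₁ : Matrix (Fin T) (Fin k₁) ℝ) (X₂ : Matrix (Fin T) (Fin k₂) ℝ) : ℝ :=
  (T : ℝ)⁻¹ * ((y - Y *ᵥ beta2S y Y X₁ X₂) ⬝ᵥ (N1 X₁ X₂ *ᵥ (y - Y *ᵥ beta2S y Y X₁ X₂)))

/-- `σ̃₂² = σ̂² − (β̃−β̂)ᵀΔ̂⁻¹(β̃−β̂)`. -/
noncomputable def sigTil2sq (y : Fin T → ℝ) (Y : Matrix (Fin T) (Fin G) ℝ)
    (X₁ : Matrix (Fin T) (Fin k₁) ℝ) (X₂ : Matrix (Fin T) (Fin k₂) ℝ) : ℝ :=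
  sigHat2 y Y X₁ -
    (beta2S y Y X₁ X₂ - betaOLS y Y X₁) ⬝ᵥ
      ((Dhat Y X₁ X₂)⁻¹ *ᵥ (beta2S y Y X₁ X₂ - betaOLS y Y X₁))

/-- The rank condition: `X₁`, `X = [X₁, X₂]`, `[Y, X]` and `[P̄[X]Y, X₁]` all have
full column rank. -/
def RankCond (Y : Matrix (Fin T) (Fin G) ℝ) (X₁ : Matrix (Fin T) (Fin k₁) ℝ)
    (X₂ : Matrix (Fin T) (Fin k₂) ℝ) : Prop :=
  X₁.rank = k₁ ∧ (fromCols X₁ X₂).rank = k₁ + k₂ ∧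
    (fromCols Y (fromCols X₁ X₂)).rank = G + (k₁ + k₂) ∧
    (fromCols (Pm X₁ X₂ * Y) X₁).rank = G + k₁

/-!
Each scaled weighting matrix is a difference of orthogonal projections with nested ranges, so its
trace is a difference of column counts; the quadratic forms `YᵀQY` that have to be inverted on the
way are Schur complements in Gram matrices of full-column-rank matrices.

The exception is `Ψ₀`. Both estimators are generalized least-squares maps `(YᵀQY)⁻¹YᵀQ`, with
`Q = N₁ ≤ M₁`, and this nesting gives `C₁C₁ᵀ = (YᵀN₁Y)⁻¹ - (YᵀM₁Y)⁻¹ = Δ̂ / T`. Hence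
`TΨ₀ = C₁ᵀ(C₁C₁ᵀ)⁻¹C₁ = P̄[C₁ᵀ]` is a projection of rank `G`; here
`C₁C₁ᵀ = (YᵀN₁Y)⁻¹ (YᵀMY) (YᵀM₁Y)⁻¹` is invertible because `M₁ - N₁ = M`.
-/

section FullColumnRank

variable {K : Type*} [Field K] {m n n₁ n₂ n₃ : Type*} [Fintype n]

theorem Matrix.linearIndependent_col_of_rank_eq {A : Matrix m n K}
    (h : A.rank = Fintype.card n) : LinearIndependent K A.col :=
  linearIndependent_iff_card_eq_finrank_span.mpr <| by
    rw [Set.finrank, ← A.rank_eq_finrank_span_cols, h]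

theorem Matrix.rank_eq_card_of_linearIndependent_col [Fintype m] {A : Matrix m n K}
    (h : LinearIndependent K A.col) : A.rank = Fintype.card n := by
  rw [← rank_transpose]
  exact LinearIndependent.rank_matrix (by rwa [row_transpose])

theorem Matrix.linearIndependent_col_fromCols_of_fromCols_fromCols
    {A : Matrix m n₁ K} {B : Matrix m n₂ K} {C : Matrix m n₃ K}
    (h : LinearIndependent K (fromCols A (fromCols B C)).col) :
    LinearIndependent K (fromCols A B).col := by
  have hcol : (fromCols A B).col = (fromCols A (fromCols B C)).col ∘ Sum.map id Sum.inl := by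
    ext (_ | _) <;> rfl
  rw [hcol]
  exact h.comp _ (Function.injective_id.sumMap Sum.inl_injective)

theorem Matrix.isUnit_transpose_mul_self_of_rank_eq [Fintype m] [LinearOrder K]
    [IsStrictOrderedRing K] [DecidableEq n] {A : Matrix m n K} (h : A.rank = Fintype.card n) : IsUnit (Aᵀ * A) :=
  linearIndependent_cols_iff_isUnit.mp <|
    linearIndependent_col_of_rank_eq (by rw [rank_transpose_mul_self, h])

theorem Matrix.inv_smul_of_ne_zero [DecidableEq n] (A : Matrix n n K) {c : K} (hc : c ≠ 0) :
    (c • A)⁻¹ = c⁻¹ • A⁻¹ := by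
  by_cases hA : IsUnit A.det
  · exact inv_eq_left_inv (by simp [nonsing_inv_mul _ hA, hc])
  · have hcA : ¬IsUnit (c • A).det := by
      rwa [det_smul, IsUnit.mul_iff, and_iff_right (pow_ne_zero _ hc).isUnit]
    rw [nonsing_inv_apply_not_isUnit _ hA, nonsing_inv_apply_not_isUnit _ hcA, smul_zero]

theorem Matrix.isUnit_nonsing_inv_sub_nonsing_inv [DecidableEq n] {A B : Matrix n n K}
    (hA : IsUnit A) (hB : IsUnit B) (hBA : IsUnit (B - A)) : IsUnit (A⁻¹ - B⁻¹) := by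
  have hAd := (isUnit_iff_isUnit_det A).mp hA
  have hBd := (isUnit_iff_isUnit_det B).mp hB
  have : A⁻¹ - B⁻¹ = A⁻¹ * (B - A) * B⁻¹ := by
    rw [Matrix.mul_sub, Matrix.sub_mul, Matrix.mul_assoc, mul_nonsing_inv _ hBd, Matrix.mul_one,
      nonsing_inv_mul _ hAd, Matrix.one_mul]
  rw [this]
  exact ((isUnit_nonsing_inv_iff.mpr hA).mul hBA).mul (isUnit_nonsing_inv_iff.mpr hB)

end FullColumnRank

section StarProjection

variable {R : Type*} [CommRing R] [StarRing R] [TrivialStar R] {ι n : Type*} [Fintype ι]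
  {Q : Matrix ι ι R}

theorem IsStarProjection.transpose_eq (hQ : IsStarProjection Q) : Qᵀ = Q := by
  rw [← conjTranspose_eq_transpose_of_trivial, ← star_eq_conjTranspose, hQ.isSelfAdjoint.star_eq]

theorem IsStarProjection.transpose_mul_mul_self (hQ : IsStarProjection Q) (Y : Matrix ι n R) :
    (Q * Y)ᵀ * (Q * Y) = Yᵀ * Q * Y := by
  rw [transpose_mul, hQ.transpose_eq, Matrix.mul_assoc, ← Matrix.mul_assoc Q,
    hQ.isIdempotentElem.eq, Matrix.mul_assoc]

end StarProjection

section OrthogonalProjection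

variable {n n' : Type*} [Fintype n] [DecidableEq n] [Fintype n'] [DecidableEq n']

theorem projM_mul {A : Matrix (Fin T) n ℝ} (h : IsUnit (Aᵀ * A)) : projM A * A = A := by
  rw [projM, Matrix.mul_assoc, Matrix.mul_assoc,
    nonsing_inv_mul _ ((isUnit_iff_isUnit_det _).mp h), Matrix.mul_one]

theorem transpose_projM (A : Matrix (Fin T) n ℝ) : (projM A)ᵀ = projM A := by
  rw [projM, transpose_mul, transpose_mul, transpose_transpose, transpose_nonsing_inv,
    transpose_mul, transpose_transpose, Matrix.mul_assoc]

theorem isStarProjection_projM {A : Matrix (Fin T) n ℝ} (h : IsUnit (Aᵀ * A)) :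
    IsStarProjection (projM A) := by
  refine isStarProjection_iff'.mpr ⟨?_, ?_⟩
  · conv_lhs => enter [2]; rw [projM]
    rw [← Matrix.mul_assoc, ← Matrix.mul_assoc, projM_mul h, projM]
  · rw [star_eq_conjTranspose, conjTranspose_eq_transpose_of_trivial, transpose_projM]

theorem isStarProjection_annM {A : Matrix (Fin T) n ℝ} (h : IsUnit (Aᵀ * A)) :
    IsStarProjection (annM A) :=
  (isStarProjection_projM h).one_sub

theorem trace_projM {A : Matrix (Fin T) n ℝ} (h : IsUnit (Aᵀ * A)) :
    (projM A).trace = Fintype.card n := by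
  rw [projM, trace_mul_comm, ← Matrix.mul_assoc,
    mul_nonsing_inv _ ((isUnit_iff_isUnit_det _).mp h), trace_one]

theorem trace_annM {A : Matrix (Fin T) n ℝ} (h : IsUnit (Aᵀ * A)) :
    (annM A).trace = T - Fintype.card n := by
  rw [annM, trace_sub, trace_one, trace_projM h, Fintype.card_fin]

theorem mul_projM_of_mul_eq {Q : Matrix (Fin T) (Fin T) ℝ} {A : Matrix (Fin T) n ℝ}
    (hQA : Q * A = A) : Q * projM A = projM A := by
  rw [projM, ← Matrix.mul_assoc, ← Matrix.mul_assoc, hQA]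

theorem projM_mul_of_mul_eq {Q : Matrix (Fin T) (Fin T) ℝ} {A : Matrix (Fin T) n ℝ}
    (hQ : Qᵀ = Q) (hQA : Q * A = A) : projM A * Q = projM A := by
  rw [← transpose_transpose (projM A * Q), transpose_mul, hQ, transpose_projM,
    mul_projM_of_mul_eq hQA, transpose_projM]

/-- The Schur complement of `BᵀB` in the Gram matrix of `[A, B]` is `Aᵀ M̄[B] A`. -/
theorem isUnit_transpose_mul_annM_mul (A : Matrix (Fin T) n ℝ) (B : Matrix (Fin T) n' ℝ)
    (hAB : IsUnit ((fromCols A B)ᵀ * fromCols A B)) (hB : IsUnit (Bᵀ * B)) :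
    IsUnit (Aᵀ * annM B * A) := by
  obtain ⟨_⟩ := hB.nonempty_invertible
  have hschur : Aᵀ * annM B * A = Aᵀ * A - Aᵀ * B * ⅟(Bᵀ * B) * (Bᵀ * A) := by
    simp only [invOf_eq_nonsing_inv, annM, projM, Matrix.mul_sub, Matrix.sub_mul,
      Matrix.mul_one, Matrix.mul_assoc]
  rw [isUnit_iff_isUnit_det, transpose_fromCols, fromRows_mul_fromCols, det_fromBlocks₂₂,
    IsUnit.mul_iff] at hAB
  rw [isUnit_iff_isUnit_det, hschur]
  exact hAB.2

end OrthogonalProjection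

theorem IsStarProjection.trace_mul_annM_mul {n : Type*} [Fintype n] [DecidableEq n]
    {Q : Matrix (Fin T) (Fin T) ℝ} (hQ : IsStarProjection Q) {Y : Matrix (Fin T) n ℝ} (h : IsUnit (Yᵀ * Q * Y)) :
    (Q * annM (Q * Y) * Q).trace = Q.trace - Fintype.card n := by
  have hQY : Q * (Q * Y) = Q * Y := by rw [← Matrix.mul_assoc, hQ.isIdempotentElem.eq]
  have hproj : Q * projM (Q * Y) * Q = projM (Q * Y) := by
    rw [mul_projM_of_mul_eq hQY, projM_mul_of_mul_eq hQ.transpose_eq hQY]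
  rw [annM, Matrix.mul_sub, Matrix.sub_mul, Matrix.mul_one, hQ.isIdempotentElem.eq, hproj,
    trace_sub, trace_projM (by rwa [hQ.transpose_mul_mul_self])]

section GeneralizedLeastSquares

variable {ι κ : Type*} [Fintype ι] [Fintype κ] [DecidableEq κ]

noncomputable def glsCoef (Q : Matrix ι ι ℝ) (Y : Matrix ι κ ℝ) : Matrix κ ι ℝ :=
  (Yᵀ * Q * Y)⁻¹ * (Yᵀ * Q)

theorem glsCoef_mul_of_mul_eq {Q R : Matrix ι ι ℝ} (hQR : Q * R = Q) (Y : Matrix ι κ ℝ) :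
    glsCoef Q Y * R = glsCoef Q Y := by
  simp only [glsCoef, Matrix.mul_assoc, hQR]

theorem transpose_glsCoef {Q : Matrix ι ι ℝ} (hQ : Qᵀ = Q) (Y : Matrix ι κ ℝ) :
    (glsCoef Q Y)ᵀ = Q * Y * (Yᵀ * Q * Y)⁻¹ := by
  rw [glsCoef, transpose_mul, transpose_nonsing_inv, transpose_mul, transpose_mul,
    transpose_mul, transpose_transpose, hQ]
  simp only [Matrix.mul_assoc]

theorem glsCoef_mul_transpose_glsCoef {Q R : Matrix ι ι ℝ} {Y : Matrix ι κ ℝ} (hR : Rᵀ = R)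
    (hQR : Q * R = Q) (hQ : IsUnit (Yᵀ * Q * Y)) :
    glsCoef Q Y * (glsCoef R Y)ᵀ = (Yᵀ * R * Y)⁻¹ := by
  have hQY : Yᵀ * Q * R * Y = Yᵀ * Q * Y := by rw [Matrix.mul_assoc Yᵀ Q R, hQR]
  rw [transpose_glsCoef hR, glsCoef, ← Matrix.mul_assoc, Matrix.mul_assoc _ (Yᵀ * Q),
    ← Matrix.mul_assoc (Yᵀ * Q), hQY, nonsing_inv_mul _ ((isUnit_iff_isUnit_det _).mp hQ),
    Matrix.one_mul]

theorem sub_glsCoef_mul_transpose {Q R : Matrix ι ι ℝ} {Y : Matrix ι κ ℝ}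
    (hQ : IsStarProjection Q) (hR : IsStarProjection R) (hQR : Q * R = Q)
    (hQu : IsUnit (Yᵀ * Q * Y)) (hRu : IsUnit (Yᵀ * R * Y)) :
    (glsCoef Q Y - glsCoef R Y) * (glsCoef Q Y - glsCoef R Y)ᵀ =
      (Yᵀ * Q * Y)⁻¹ - (Yᵀ * R * Y)⁻¹ := by
  have hQR' := glsCoef_mul_transpose_glsCoef hR.transpose_eq hQR hQu
  have hRQ : glsCoef R Y * (glsCoef Q Y)ᵀ = (Yᵀ * R * Y)⁻¹ := by
    rw [← transpose_transpose (glsCoef R Y * _), transpose_mul, transpose_transpose, hQR',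
      transpose_nonsing_inv, transpose_mul, transpose_mul, transpose_transpose, hR.transpose_eq,
      Matrix.mul_assoc]
  rw [transpose_sub, Matrix.sub_mul, Matrix.mul_sub, Matrix.mul_sub, hQR', hRQ,
    glsCoef_mul_transpose_glsCoef hQ.transpose_eq hQ.isIdempotentElem.eq hQu,
    glsCoef_mul_transpose_glsCoef hR.transpose_eq hR.isIdempotentElem.eq hRu]
  abel

end GeneralizedLeastSquares

section RegressorProjections

variable {X₁ : Matrix (Fin T) (Fin k₁) ℝ} {X₂ : Matrix (Fin T) (Fin k₂) ℝ}

theorem isStarProjection_M1 (hX₁ : IsUnit (X₁ᵀ * X₁)) : IsStarProjection (M1 X₁) :=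
  isStarProjection_annM hX₁

theorem isStarProjection_Pm (hX : IsUnit ((fromCols X₁ X₂)ᵀ * fromCols X₁ X₂)) :
    IsStarProjection (Pm X₁ X₂) :=
  isStarProjection_projM hX

theorem Pm_mul_X₁ (hX : IsUnit ((fromCols X₁ X₂)ᵀ * fromCols X₁ X₂)) : Pm X₁ X₂ * X₁ = X₁ := by
  have h := projM_mul hX
  rw [mul_fromCols] at h
  exact (fromCols_inj h).1

theorem N1_eq (hX : IsUnit ((fromCols X₁ X₂)ᵀ * fromCols X₁ X₂)) :
    N1 X₁ X₂ = Pm X₁ X₂ - projM X₁ := by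
  rw [N1, M1, annM, Matrix.sub_mul, Matrix.one_mul,
    projM_mul_of_mul_eq (isStarProjection_Pm hX).transpose_eq (Pm_mul_X₁ hX)]

theorem isStarProjection_N1 (hX₁ : IsUnit (X₁ᵀ * X₁))
    (hX : IsUnit ((fromCols X₁ X₂)ᵀ * fromCols X₁ X₂)) : IsStarProjection (N1 X₁ X₂) := by
  rw [N1_eq hX]
  exact (isStarProjection_projM hX₁).sub_of_mul_eq_right (isStarProjection_Pm hX)
    (mul_projM_of_mul_eq (Pm_mul_X₁ hX))

theorem Pm_mul_N1 (hX : IsUnit ((fromCols X₁ X₂)ᵀ * fromCols X₁ X₂)) :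
    Pm X₁ X₂ * N1 X₁ X₂ = N1 X₁ X₂ := by
  rw [N1_eq hX, Matrix.mul_sub, (isStarProjection_Pm hX).isIdempotentElem.eq,
    mul_projM_of_mul_eq (Pm_mul_X₁ hX)]

theorem M1_mul_N1 (hX₁ : IsUnit (X₁ᵀ * X₁)) : M1 X₁ * N1 X₁ X₂ = N1 X₁ X₂ := by
  rw [N1, ← Matrix.mul_assoc, (isStarProjection_M1 hX₁).isIdempotentElem.eq]

theorem N1_mul_M1 (hX₁ : IsUnit (X₁ᵀ * X₁))
    (hX : IsUnit ((fromCols X₁ X₂)ᵀ * fromCols X₁ X₂)) : N1 X₁ X₂ * M1 X₁ = N1 X₁ X₂ := by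
  rw [← (isStarProjection_N1 hX₁ hX).transpose_eq, ← (isStarProjection_M1 hX₁).transpose_eq,
    ← transpose_mul, M1_mul_N1 hX₁]

theorem M1_sub_N1 (hX : IsUnit ((fromCols X₁ X₂)ᵀ * fromCols X₁ X₂)) :
    M1 X₁ - N1 X₁ X₂ = Mm X₁ X₂ := by
  rw [N1_eq hX, M1, Mm, annM, annM, Pm]
  abel

theorem trace_M1 (hX₁ : IsUnit (X₁ᵀ * X₁)) : (M1 X₁).trace = T - k₁ := by
  rw [M1, trace_annM hX₁, Fintype.card_fin]

theorem trace_N1 (hX₁ : IsUnit (X₁ᵀ * X₁))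
    (hX : IsUnit ((fromCols X₁ X₂)ᵀ * fromCols X₁ X₂)) : (N1 X₁ X₂).trace = k₂ := by
  rw [N1_eq hX, trace_sub, Pm, trace_projM hX, trace_projM hX₁]
  simp

end RegressorProjections

namespace RankCond

variable {Y : Matrix (Fin T) (Fin G) ℝ} {X₁ : Matrix (Fin T) (Fin k₁) ℝ}
  {X₂ : Matrix (Fin T) (Fin k₂) ℝ} (h : RankCond Y X₁ X₂)
include h

theorem isUnit_gram_X₁ : IsUnit (X₁ᵀ * X₁) :=
  isUnit_transpose_mul_self_of_rank_eq (by simpa using h.1)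

theorem isUnit_gram_X : IsUnit ((fromCols X₁ X₂)ᵀ * fromCols X₁ X₂) :=
  isUnit_transpose_mul_self_of_rank_eq (by simpa using h.2.1)

theorem isUnit_gram_Zfull : IsUnit ((Zfull Y X₁ X₂)ᵀ * Zfull Y X₁ X₂) :=
  isUnit_transpose_mul_self_of_rank_eq (by simpa [Zfull] using h.2.2.1)

theorem isUnit_gram_Ybar : IsUnit ((Ybar Y X₁)ᵀ * Ybar Y X₁) :=
  isUnit_transpose_mul_self_of_rank_eq <| rank_eq_card_of_linearIndependent_col <|
    linearIndependent_col_fromCols_of_fromCols_fromCols (C := X₂) <|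
      linearIndependent_col_of_rank_eq (by simpa using h.2.2.1)

theorem isUnit_quad_M1 : IsUnit (Yᵀ * M1 X₁ * Y) :=
  isUnit_transpose_mul_annM_mul Y X₁ h.isUnit_gram_Ybar h.isUnit_gram_X₁

theorem isUnit_quad_Mm : IsUnit (Yᵀ * Mm X₁ X₂ * Y) :=
  isUnit_transpose_mul_annM_mul Y _ h.isUnit_gram_Zfull h.isUnit_gram_X

theorem isUnit_quad_N1 : IsUnit (Yᵀ * N1 X₁ X₂ * Y) := by
  have hPY := isUnit_transpose_mul_annM_mul (Pm X₁ X₂ * Y) X₁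
    (isUnit_transpose_mul_self_of_rank_eq (by simpa using h.2.2.2)) h.isUnit_gram_X₁
  have hquad : (Pm X₁ X₂ * Y)ᵀ * annM X₁ * (Pm X₁ X₂ * Y) = Yᵀ * N1 X₁ X₂ * Y := by
    rw [transpose_mul, (isStarProjection_Pm h.isUnit_gram_X).transpose_eq]
    simp only [Matrix.mul_assoc]
    rw [← Matrix.mul_assoc (annM X₁)]
    change Yᵀ * (Pm X₁ X₂ * (N1 X₁ X₂ * Y)) = _
    rw [← Matrix.mul_assoc (Pm X₁ X₂), Pm_mul_N1 h.isUnit_gram_X]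
  rwa [hquad] at hPY

end RankCond

section WeightingMatrices

variable {Y : Matrix (Fin T) (Fin G) ℝ} {X₁ : Matrix (Fin T) (Fin k₁) ℝ}
  {X₂ : Matrix (Fin T) (Fin k₂) ℝ}

theorem C1_eq_sub_glsCoef : C1 Y X₁ X₂ = glsCoef (N1 X₁ X₂) Y - glsCoef (M1 X₁) Y := rfl

theorem C1_mul_M1 (hX₁ : IsUnit (X₁ᵀ * X₁)) (hX : IsUnit ((fromCols X₁ X₂)ᵀ * fromCols X₁ X₂)) :
    C1 Y X₁ X₂ * M1 X₁ = C1 Y X₁ X₂ := by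
  rw [C1_eq_sub_glsCoef, Matrix.sub_mul, glsCoef_mul_of_mul_eq (N1_mul_M1 hX₁ hX),
    glsCoef_mul_of_mul_eq (isStarProjection_M1 hX₁).isIdempotentElem.eq]

theorem RankCond.C1_mul_transpose (h : RankCond Y X₁ X₂) :
    C1 Y X₁ X₂ * (C1 Y X₁ X₂)ᵀ = (Yᵀ * N1 X₁ X₂ * Y)⁻¹ - (Yᵀ * M1 X₁ * Y)⁻¹ :=
  sub_glsCoef_mul_transpose (isStarProjection_N1 h.isUnit_gram_X₁ h.isUnit_gram_X)
    (isStarProjection_M1 h.isUnit_gram_X₁) (N1_mul_M1 h.isUnit_gram_X₁ h.isUnit_gram_X)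
    h.isUnit_quad_N1 h.isUnit_quad_M1

theorem RankCond.isUnit_C1_mul_transpose (h : RankCond Y X₁ X₂) :
    IsUnit (C1 Y X₁ X₂ * (C1 Y X₁ X₂)ᵀ) := by
  rw [h.C1_mul_transpose]
  refine isUnit_nonsing_inv_sub_nonsing_inv h.isUnit_quad_N1 h.isUnit_quad_M1 ?_
  rw [← Matrix.sub_mul, ← Matrix.mul_sub, M1_sub_N1 h.isUnit_gram_X]
  exact h.isUnit_quad_Mm

theorem RankCond.Dhat_eq (hT : (T : ℝ) ≠ 0) (h : RankCond Y X₁ X₂) :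
    Dhat Y X₁ X₂ = (T : ℝ) • (C1 Y X₁ X₂ * (C1 Y X₁ X₂)ᵀ) := by
  rw [Dhat, OmIV, OmLS, inv_smul_of_ne_zero _ (inv_ne_zero hT),
    inv_smul_of_ne_zero _ (inv_ne_zero hT), inv_inv, ← smul_sub, h.C1_mul_transpose]

theorem RankCond.smul_Psi0 (hT : (T : ℝ) ≠ 0) (h : RankCond Y X₁ X₂) :
    (T : ℝ) • Psi0 Y X₁ X₂ = projM (C1 Y X₁ X₂)ᵀ := by
  rw [Psi0, h.Dhat_eq hT, inv_smul_of_ne_zero _ hT, Matrix.mul_smul, Matrix.smul_mul,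
    smul_inv_smul₀ hT, projM, transpose_transpose]

theorem RankCond.smul_Lam2 (hT : (T : ℝ) ≠ 0) (h : RankCond Y X₁ X₂) :
    (T : ℝ) • Lam2 Y X₁ X₂ = M1 X₁ * annM (M1 X₁ * Y) * M1 X₁ - projM (C1 Y X₁ X₂)ᵀ := by
  have hM1 := (isStarProjection_M1 h.isUnit_gram_X₁).transpose_eq
  have hC1 : M1 X₁ * (C1 Y X₁ X₂)ᵀ = (C1 Y X₁ X₂)ᵀ := by
    rw [← hM1, ← transpose_mul, C1_mul_M1 h.isUnit_gram_X₁ h.isUnit_gram_X]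
  rw [Lam2, ← Matrix.smul_mul, ← Matrix.mul_smul, smul_sub, smul_inv_smul₀ hT, h.smul_Psi0 hT,
    Matrix.mul_sub, Matrix.sub_mul, mul_projM_of_mul_eq hC1, projM_mul_of_mul_eq hM1 hC1]

end WeightingMatrices

theorem stmt11_general {T G k₁ k₂ : ℕ}
    (hT : 0 < T)
    (Y : Matrix (Fin T) (Fin G) ℝ)
    (X₁ : Matrix (Fin T) (Fin k₁) ℝ) (X₂ : Matrix (Fin T) (Fin k₂) ℝ)
    (hrank : RankCond Y X₁ X₂) :
    ((T : ℝ) • Psi0 Y X₁ X₂).trace = (G : ℝ) ∧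
    ((T : ℝ) • Lam1 Y X₁ X₂).trace = (k₂ : ℝ) - (G : ℝ) ∧
    ((T : ℝ) • Lam2 Y X₁ X₂).trace = (T : ℝ) - (k₁ : ℝ) - 2 * (G : ℝ) ∧
    ((T : ℝ) • Lam4 Y X₁).trace = (T : ℝ) - (k₁ : ℝ) - (G : ℝ) ∧
    ((T : ℝ) • PsiR Y X₁ X₂).trace = (k₂ : ℝ) ∧
    ((T : ℝ) • LamR Y X₁ X₂).trace = (T : ℝ) - (k₁ : ℝ) - (k₂ : ℝ) - (G : ℝ) := by
  have hT0 : (T : ℝ) ≠ 0 := by positivity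
  have hM1 := isStarProjection_M1 hrank.isUnit_gram_X₁
  have hN1 := isStarProjection_N1 hrank.isUnit_gram_X₁ hrank.isUnit_gram_X
  have htrM1 := trace_M1 hrank.isUnit_gram_X₁
  have htrC1 : (projM (C1 Y X₁ X₂)ᵀ).trace = G := by
    rw [trace_projM (by rw [transpose_transpose]; exact hrank.isUnit_C1_mul_transpose),
      Fintype.card_fin]
  refine ⟨?_, ?_, ?_, ?_, ?_, ?_⟩
  · rw [hrank.smul_Psi0 hT0, htrC1]
  · rw [Lam1, smul_inv_smul₀ hT0, hN1.trace_mul_annM_mul hrank.isUnit_quad_N1,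
      trace_N1 hrank.isUnit_gram_X₁ hrank.isUnit_gram_X, Fintype.card_fin]
  · rw [hrank.smul_Lam2 hT0, trace_sub, hM1.trace_mul_annM_mul hrank.isUnit_quad_M1, htrM1,
      htrC1, Fintype.card_fin]
    ring
  · rw [Lam4, smul_inv_smul₀ hT0, hM1.trace_mul_annM_mul hrank.isUnit_quad_M1, htrM1,
      Fintype.card_fin]
  · rw [PsiR, smul_inv_smul₀ hT0, trace_sub, trace_annM hrank.isUnit_gram_Ybar,
      trace_annM hrank.isUnit_gram_Zfull]
    simp only [Fintype.card_sum, Fintype.card_fin, Nat.cast_add]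
    ring
  · rw [LamR, smul_inv_smul₀ hT0, trace_annM hrank.isUnit_gram_Zfull]
    simp only [Fintype.card_sum, Fintype.card_fin, Nat.cast_add]
    ring

/-- Under the rank condition, the traces (equivalently, the ranks) of the scaled
weighting matrices are: `tr(TΨ₀) = G`, `tr(TΛ₁) = k₂ − G`, `tr(TΛ₂) = T − k₁ − 2G`,
`tr(TΛ₄) = T − k₁ − G`, `tr(TΨ_R) = k₂`, and `tr(TΛ_R) = T − k₁ − k₂ − G`. -/
theorem stmt11 {T G k₁ k₂ : ℕ}
    (hT : 0 < T) (hG : 0 < G) (hk₁ : 0 < k₁) (hk₂ : 0 < k₂)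
    (Y : Matrix (Fin T) (Fin G) ℝ)
    (X₁ : Matrix (Fin T) (Fin k₁) ℝ) (X₂ : Matrix (Fin T) (Fin k₂) ℝ)
    (hrank : RankCond Y X₁ X₂) :
    ((T : ℝ) • Psi0 Y X₁ X₂).trace = (G : ℝ) ∧
    ((T : ℝ) • Lam1 Y X₁ X₂).trace = (k₂ : ℝ) - (G : ℝ) ∧
    ((T : ℝ) • Lam2 Y X₁ X₂).trace = (T : ℝ) - (k₁ : ℝ) - 2 * (G : ℝ) ∧
    ((T : ℝ) • Lam4 Y X₁).trace = (T : ℝ) - (k₁ : ℝ) - (G : ℝ) ∧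
    ((T : ℝ) • PsiR Y X₁ X₂).trace = (k₂ : ℝ) ∧
    ((T : ℝ) • LamR Y X₁ X₂).trace = (T : ℝ) - (k₁ : ℝ) - (k₂ : ℝ) - (G : ℝ) :=
  stmt11_general hT Y X₁ X₂ hrank
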